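/- Let M and N be von Neumann algebras acting on a Hilbert space H with M ⊆_γ N and N ⊆_γ M. Let ζ ∈ H be a unit vector, let p ∈ M′ be the projection onto the closure of Mζ and q ∈ N′ the projection onto the closure of Nζ. Then for every x in the unit ball of M, ‖(px)(pqp) − (pqp)(px)‖ ≤ 2γ; that is, the derivation ad(pqp) restricted to Mp has norm at most 2γ. -/

import Mathlib

noncomputable section

variable {H : Type*} [NormedAddCommGroup H] [InnerProductSpace ℂ H] [CompleteSpace H]

/-- The near inclusion `M ⊆_γ N`: every `x ∈ M` admits `y ∈ N` with `‖x - y‖ ≤ γ‖x‖`. -/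
def NearIncl (M N : Set (H →L[ℂ] H)) (γ : ℝ) : Prop :=
  ∀ x ∈ M, ∃ y ∈ N, ‖x - y‖ ≤ γ * ‖x‖

/-- A von Neumann algebra is a factor if its center consists of scalars. -/
def IsFactor (M : VonNeumannAlgebra H) : Prop :=
  ∀ x ∈ M, (∀ y ∈ M, x * y = y * x) → ∃ c : ℂ, x = c • (1 : H →L[ℂ] H)

/-- A von Neumann algebra is diffuse if it has no minimal projections. -/
def IsDiffuse (M : VonNeumannAlgebra H) : Prop :=
  ∀ p : H →L[ℂ] H, p ∈ M → IsSelfAdjoint p → IsIdempotentElem p → p ≠ 0 →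
    ∃ q : H →L[ℂ] H, q ∈ M ∧ IsSelfAdjoint q ∧ IsIdempotentElem q ∧
      q * p = q ∧ p * q = q ∧ q ≠ 0 ∧ q ≠ p

/-- `τ` is a faithful tracial state on the von Neumann algebra `M`. -/
def IsTracialState (M : VonNeumannAlgebra H) (τ : (H →L[ℂ] H) →ₗ[ℂ] ℂ) : Prop :=
  τ 1 = 1 ∧ (∀ x ∈ M, 0 ≤ (τ (star x * x)).re ∧ (τ (star x * x)).im = 0) ∧
    (∀ x ∈ M, ∀ y ∈ M, τ (x * y) = τ (y * x)) ∧
    (∀ x ∈ M, τ (star x * x) = 0 → x = 0)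

/-- `M` is a II₁ factor with (unique) tracial state `τ`: an infinite-dimensional
(diffuse) finite factor. -/
def IsIIOneFactor (M : VonNeumannAlgebra H) (τ : (H →L[ℂ] H) →ₗ[ℂ] ℂ) : Prop :=
  IsFactor M ∧ IsDiffuse M ∧ IsTracialState M τ

/-- The orthogonal projection of `H` onto the closed subspace generated by `S`. -/
def projCl (S : Set H) : H →L[ℂ] H :=
  letI K := (Submodule.span ℂ S).topologicalClosure
  haveI : CompleteSpace K := (Submodule.isClosed_topologicalClosure _).completeSpace_coe
  K.subtypeL ∘L K.orthogonalProjectionOnto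

/-! Since `p` commutes with `M` and `q` with `N`, replacing `x ∈ M` by a nearby `y ∈ N` inside
the commutator `[px, pqp]` leaves an error `p(x - y)qp + pq(y - x)p`, whose norm is at most
`2‖x - y‖ ≤ 2γ`. -/

section Algebra

variable {R : Type*}

theorem mul_corner_sub_corner_mul_eq [Ring R] {p q x : R} (y : R) (hpx : Commute p x)
    (hqy : Commute q y) (hp : IsIdempotentElem p) :
    p * x * (p * q * p) - p * q * p * (p * x) = p * (x - y) * q * p + p * q * (y - x) * p := by
  have hpxp : p * x * p = x * p := by rw [hpx.eq, mul_assoc, hp.eq]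
  have hpqpp : p * q * p * p = p * q * p := by rw [mul_assoc _ p p, hp.eq]
  calc p * x * (p * q * p) - p * q * p * (p * x)
      = x * p * q * p - p * q * x * p := by
        rw [← mul_assoc, ← mul_assoc, hpxp, ← mul_assoc, hpqpp, mul_assoc (p * q), hpx.eq,
          ← mul_assoc]
    _ = p * (x - y) * q * p + p * q * (y - x) * p := by
        simp only [mul_sub, sub_mul, mul_assoc, hpx.eq, hqy.eq]
        abel

theorem norm_corner_add_le [NonUnitalSeminormedRing R] {p q : R} (hp : ‖p‖ ≤ 1) (hq : ‖q‖ ≤ 1)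
    (a b : R) : ‖p * a * q * p + p * q * b * p‖ ≤ ‖a‖ + ‖b‖ := by
  have h₁ : ‖p * a * q * p‖ ≤ ‖a‖ :=
    calc ‖p * a * q * p‖ ≤ ‖p‖ * ‖a‖ * ‖q‖ * ‖p‖ := by
          grw [norm_mul_le, norm_mul_le, norm_mul_le]
      _ ≤ 1 * ‖a‖ * 1 * 1 := by gcongr
      _ = ‖a‖ := by ring
  have h₂ : ‖p * q * b * p‖ ≤ ‖b‖ :=
    calc ‖p * q * b * p‖ ≤ ‖p‖ * ‖q‖ * ‖b‖ * ‖p‖ := by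
          grw [norm_mul_le, norm_mul_le, norm_mul_le]
      _ ≤ 1 * 1 * ‖b‖ * 1 := by gcongr
      _ = ‖b‖ := by ring
  exact (norm_add_le _ _).trans (add_le_add h₁ h₂)

theorem Submodule.span_mem_invtSubmodule [Semiring R] {E : Type*} [AddCommMonoid E] [Module R E]
    {S : Set E} {f : Module.End R E} (hf : Set.MapsTo f S (Submodule.span R S)) :
    Submodule.span R S ∈ Module.End.invtSubmodule f := by
  rwa [Module.End.mem_invtSubmodule, Submodule.span_le]

end Algebra

theorem NearIncl.nonneg {E : Type*} [NormedAddCommGroup E] [InnerProductSpace ℂ E]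
    {M N : Set (E →L[ℂ] E)} {γ : ℝ} (h : NearIncl M N γ) {x : E →L[ℂ] E}
    (hxM : x ∈ M) (hx : x ≠ 0) : 0 ≤ γ := by
  obtain ⟨y, -, hxy⟩ := h x hxM
  exact nonneg_of_mul_nonneg_left ((norm_nonneg _).trans hxy) (norm_pos_iff.mpr hx)

section projCl

open Module.End

variable (S : Set H)

instance : (Submodule.span ℂ S).topologicalClosure.HasOrthogonalProjection :=
  haveI := (Submodule.isClosed_topologicalClosure (Submodule.span ℂ S)).completeSpace_coe
  inferInstance

theorem projCl_eq_starProjection :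
    projCl S = (Submodule.span ℂ S).topologicalClosure.starProjection :=
  rfl

theorem isIdempotentElem_projCl : IsIdempotentElem (projCl S) := by
  rw [projCl_eq_starProjection]
  exact Submodule.isIdempotentElem_starProjection _

theorem norm_projCl_le : ‖projCl S‖ ≤ 1 := by
  rw [projCl_eq_starProjection]
  exact Submodule.starProjection_norm_le _

theorem commute_projCl {T : H →L[ℂ] H} (hT : Set.MapsTo T S (Submodule.span ℂ S))
    (hT' : Set.MapsTo (ContinuousLinearMap.adjoint T) S (Submodule.span ℂ S)) :
    Commute (projCl S) T := by
  set K := (Submodule.span ℂ S).topologicalClosure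
  have hK : K ∈ invtSubmodule T.toLinearMap :=
    (Submodule.span ℂ S).topologicalClosure_mem_invtSubmodule (Submodule.span_mem_invtSubmodule hT)
  have hK' : K ∈ invtSubmodule (ContinuousLinearMap.adjoint T).toLinearMap :=
    (Submodule.span ℂ S).topologicalClosure_mem_invtSubmodule (Submodule.span_mem_invtSubmodule hT')
  rw [ContinuousLinearMap.IsIdempotentElem.commute_iff (isIdempotentElem_projCl S),
    projCl_eq_starProjection, Submodule.range_starProjection, Submodule.ker_starProjection]
  exact ⟨hK, ContinuousLinearMap.orthogonal_mem_invtSubmodule hK'⟩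

end projCl

theorem commute_projCl_orbit {A : Type*} [SetLike A (H →L[ℂ] H)] [MulMemClass A (H →L[ℂ] H)]
    [StarMemClass A (H →L[ℂ] H)] (M : A) (ζ : H) {z : H →L[ℂ] H}
    (hz : z ∈ M) : Commute (projCl {y : H | ∃ x ∈ M, x ζ = y}) z := by
  refine commute_projCl _ ?_ ?_
  · rintro - ⟨m, hm, rfl⟩
    exact Submodule.subset_span ⟨z * m, mul_mem hz hm, rfl⟩
  · rintro - ⟨m, hm, rfl⟩
    exact Submodule.subset_span ⟨star z * m, mul_mem (star_mem hz) hm, rfl⟩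

theorem stmt_15_general (M N : VonNeumannAlgebra H) (γ : ℝ)
    (h1 : NearIncl (M : Set (H →L[ℂ] H)) (N : Set (H →L[ℂ] H)) γ)
    (ζ : H) (hζ : ‖ζ‖ = 1) :
    ∀ p q : H →L[ℂ] H,
      p = projCl {y : H | ∃ x ∈ M, x ζ = y} →
      q = projCl {y : H | ∃ x ∈ N, x ζ = y} →
      ∀ x ∈ M, ‖x‖ ≤ 1 →
        ‖(p * x) * (p * q * p) - (p * q * p) * (p * x)‖ ≤ 2 * γ := by
  rintro p q rfl rfl x hxM hx
  obtain ⟨y, hyN, hxy⟩ := h1 x hxM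
  have : Nontrivial H := nontrivial_of_ne ζ 0 (norm_ne_zero_iff.mp (by simp [hζ]))
  have hγ : 0 ≤ γ := h1.nonneg (one_mem M) one_ne_zero
  rw [mul_corner_sub_corner_mul_eq y (commute_projCl_orbit M ζ hxM)
    (commute_projCl_orbit N ζ hyN) (isIdempotentElem_projCl _)]
  calc _ ≤ ‖x - y‖ + ‖y - x‖ := norm_corner_add_le (norm_projCl_le _) (norm_projCl_le _) _ _
    _ = 2 * ‖x - y‖ := by rw [norm_sub_rev]; ring
    _ ≤ 2 * (γ * ‖x‖) := by gcongr
    _ ≤ 2 * γ := by gcongr; exact mul_le_of_le_one_right hγ hx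

/-- with `p`, `q` the projections onto the closures of `Mζ`, `Nζ`
respectively, the derivation `ad(pqp)` restricted to `Mp` has norm at most `2γ`. -/
theorem stmt_15 (M N : VonNeumannAlgebra H) (γ : ℝ)
    (h1 : NearIncl (M : Set (H →L[ℂ] H)) (N : Set (H →L[ℂ] H)) γ)
    (h2 : NearIncl (N : Set (H →L[ℂ] H)) (M : Set (H →L[ℂ] H)) γ)
    (ζ : H) (hζ : ‖ζ‖ = 1) :
    ∀ p q : H →L[ℂ] H,
      p = projCl {y : H | ∃ x ∈ M, x ζ = y} →
      q = projCl {y : H | ∃ x ∈ N, x ζ = y} →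
      ∀ x ∈ M, ‖x‖ ≤ 1 →
        ‖(p * x) * (p * q * p) - (p * q * p) * (p * x)‖ ≤ 2 * γ :=
  stmt_15_general M N γ h1 ζ hζ
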